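/- Let φ ∈ C²((0,∞); ℝ) and F > 0. Let w be the unique element of 𝒰 whose backward difference satisfies w'_{K+2} = (2ε)^{−1/2}, w'_{−K−1} = −(2ε)^{−1/2}, and w'_ℓ = 0 for all other ℓ in {−N+1, …, N}. Then ‖w'‖_{ℓ²_ε} = 1 and E_qce''(y_F)[w,w] = A_F + (1/2)φ''(2F). In particular, if A_F + (1/2)φ''(2F) ≤ 0, then E_qce''(y_F) is not positive definite on 𝒰 ∖ {0}. -/

import Mathlib

open Finset Real

noncomputable section

/-- The index set `{-N+1, ..., N}` of one period. -/
def idx (N : ℕ) : Finset ℤ := Finset.Icc (-(N : ℤ) + 1) (N : ℤ)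

/-- The space 𝒰 of 2N-periodic displacements with zero mean. -/
def uSet (N : ℕ) : Set (ℤ → ℝ) :=
  {u | (∀ ℓ : ℤ, u (ℓ + 2 * (N : ℤ)) = u ℓ) ∧ ∑ ℓ ∈ idx N, u ℓ = 0}

/-- Backward difference `v'_ℓ = ε⁻¹ (v_ℓ - v_{ℓ-1})`, with `ε = 1/N`. -/
def bD (N : ℕ) (v : ℤ → ℝ) (ℓ : ℤ) : ℝ := (N : ℝ) * (v ℓ - v (ℓ - 1))

/-- Centered second difference `v''_ℓ = ε⁻² (v_{ℓ+1} - 2 v_ℓ + v_{ℓ-1})`. -/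
def cD2 (N : ℕ) (v : ℤ → ℝ) (ℓ : ℤ) : ℝ := (N : ℝ) ^ 2 * (v (ℓ + 1) - 2 * v ℓ + v (ℓ - 1))

/-- Weighted ℓ²-norm. -/
def nl2 (N : ℕ) (v : ℤ → ℝ) : ℝ := Real.sqrt ((N : ℝ)⁻¹ * ∑ ℓ ∈ idx N, (v ℓ) ^ 2)

/-- Weighted ℓ¹-norm. -/
def nl1 (N : ℕ) (v : ℤ → ℝ) : ℝ := (N : ℝ)⁻¹ * ∑ ℓ ∈ idx N, |v ℓ|

/-- ℓ∞-norm over one period. -/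
def nlinf (N : ℕ) (v : ℤ → ℝ) : ℝ := ⨆ ℓ : {ℓ : ℤ // ℓ ∈ idx N}, |v ℓ.1|

/-- Weighted ℓ²-inner product. -/
def iprod (N : ℕ) (u v : ℤ → ℝ) : ℝ := (N : ℝ)⁻¹ * ∑ ℓ ∈ idx N, u ℓ * v ℓ

/-- The uniform deformation `(y_F)_ℓ = F ℓ ε`. -/
def yF (N : ℕ) (F : ℝ) : ℤ → ℝ := fun ℓ => F * (ℓ : ℝ) * (N : ℝ)⁻¹

/-- First variation `E'(y)[u]`. -/
def dE (E : (ℤ → ℝ) → ℝ) (y u : ℤ → ℝ) : ℝ := deriv (fun t : ℝ => E (y + t • u)) 0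

/-- Second variation `E''(y)[u,v]`. -/
def d2E (E : (ℤ → ℝ) → ℝ) (y u v : ℤ → ℝ) : ℝ :=
  deriv (fun s : ℝ => deriv (fun t : ℝ => E (y + s • u + t • v)) 0) 0

/-- The atomistic energy. -/
def Ea (N : ℕ) (φ : ℝ → ℝ) (y : ℤ → ℝ) : ℝ :=
  (N : ℝ)⁻¹ * ∑ ℓ ∈ idx N, (φ (bD N y ℓ) + φ (bD N y ℓ + bD N y (ℓ + 1)))

/-- The local QC (continuum) energy. -/
def Eqcl (N : ℕ) (φ : ℝ → ℝ) (y : ℤ → ℝ) : ℝ :=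
  (N : ℝ)⁻¹ * ∑ ℓ ∈ idx N, (φ (bD N y ℓ) + φ (2 * bD N y ℓ))

/-- The QNL atomistic region `{-K-1, ..., K+1}`. -/
def aQnl (K : ℕ) : Finset ℤ := Finset.Icc (-(K : ℤ) - 1) ((K : ℤ) + 1)

/-- The quasi-nonlocal QC energy. -/
def Eqnl (N K : ℕ) (φ : ℝ → ℝ) (y : ℤ → ℝ) : ℝ :=
  (N : ℝ)⁻¹ * ((∑ ℓ ∈ idx N, φ (bD N y ℓ))
    + (∑ ℓ ∈ aQnl K, φ (bD N y ℓ + bD N y (ℓ + 1)))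
    + ∑ ℓ ∈ idx N \ aQnl K, (φ (2 * bD N y ℓ) + φ (2 * bD N y (ℓ + 1))) / 2)

/-- The QCE atomistic region `{-K, ..., K}`. -/
def aQce (K : ℕ) : Finset ℤ := Finset.Icc (-(K : ℤ)) (K : ℤ)

/-- Atomistic energy contribution of atom ℓ. -/
def eAtom (N : ℕ) (φ : ℝ → ℝ) (y : ℤ → ℝ) (ℓ : ℤ) : ℝ :=
  (φ (bD N y ℓ) + φ (bD N y (ℓ + 1)) + φ (bD N y (ℓ - 1) + bD N y ℓ)
    + φ (bD N y (ℓ + 1) + bD N y (ℓ + 2))) / 2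

/-- Continuum energy contribution of atom ℓ. -/
def eCont (N : ℕ) (φ : ℝ → ℝ) (y : ℤ → ℝ) (ℓ : ℤ) : ℝ :=
  (φ (bD N y ℓ) + φ (bD N y (ℓ + 1)) + φ (2 * bD N y ℓ) + φ (2 * bD N y (ℓ + 1))) / 2

/-- The energy-based QC energy. -/
def Eqce (N K : ℕ) (φ : ℝ → ℝ) (y : ℤ → ℝ) : ℝ :=
  (N : ℝ)⁻¹ * ((∑ ℓ ∈ idx N \ aQce K, eCont N φ y ℓ) + ∑ ℓ ∈ aQce K, eAtom N φ y ℓ)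

/-- The prescribed backward difference `ĝ'` of the ghost-force corrector. -/
def ghatD (K : ℕ) (ℓ : ℤ) : ℝ :=
  if ℓ = -(K : ℤ) - 1 ∨ ℓ = (K : ℤ) + 2 then -(1 / 2)
  else if ℓ = -(K : ℤ) + 1 ∨ ℓ = (K : ℤ) then 1 / 2 else 0

/-- `μ_ε = 2 sin(π ε / 2) / ε` with `ε = 1/N`. -/
def muEps (N : ℕ) : ℝ := 2 * Real.sin (Real.pi * (N : ℝ)⁻¹ / 2) / (N : ℝ)⁻¹

/-- The `𝒰^{-1,∞}`-norm of a functional `T` on 𝒰. -/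
def dualNorm (N : ℕ) (T : (ℤ → ℝ) → ℝ) : ℝ :=
  sSup {r : ℝ | ∃ v ∈ uSet N, nl1 N (bD N v) = 1 ∧ r = T v}

/-! Along the line `r ↦ y_F + r • u` every bond length entering `E_qce` is affine in `r`, equal to
`F` or `2F` at `r = 0`, so each interaction `φ (a + b r)` contributes `b² φ''(a)` to the second
derivative at `0`; this expresses `E_qce''(y_F)[u, u]` as an explicit quadratic form in `u'`.
For the test displacement `w`, `w'` is carried by the two bonds `K + 2` and `-K - 1` just outside
the atomistic region, with `(w')² = N / 2` there. Each of them is seen twice by continuum sites,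
with weight `(φ''(F) + 4 φ''(2F)) / 2`, and once more by an interface atom `±K` through its
second-neighbour bond, with weight `φ''(2F) / 2`: this last term is the interface excess
`½ φ''(2F)`. -/

section AffineComposition

variable {𝕜 E : Type*} [NontriviallyNormedField 𝕜] [NormedAddCommGroup E] [NormedSpace 𝕜 E]

theorem iteratedDeriv_comp_const_add_mul (f : 𝕜 → E) (a b : 𝕜) (n : ℕ) :
    iteratedDeriv n (fun x => f (a + b * x)) = fun x => b ^ n • iteratedDeriv n f (a + b * x) := by
  induction n with
  | zero => simp
  | succ n ih =>
    ext x
    rw [iteratedDeriv_succ, ih, deriv_fun_const_smul_field,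
      deriv_comp_mul_left b (fun y => iteratedDeriv n f (a + y)), deriv_comp_const_add,
      iteratedDeriv_succ, smul_smul, pow_succ]

variable {f : 𝕜 → E}

theorem ContDiffAt.comp_const_add_mul {n : WithTop ℕ∞} {a : 𝕜} (hf : ContDiffAt 𝕜 n f a)
    (b : 𝕜) : ContDiffAt 𝕜 n (fun x => f (a + b * x)) 0 := by
  have hf' : ContDiffAt 𝕜 n f (a + b * 0) := by simpa using hf
  exact hf'.comp 0 (by fun_prop)

variable {ι : Type*} (s : Finset ι) (a b : ι → 𝕜) {n : ℕ}

theorem contDiffAt_sum_comp_const_add_mul (h : ∀ i ∈ s, ContDiffAt 𝕜 n f (a i)) :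
    ContDiffAt 𝕜 n (fun x => ∑ i ∈ s, f (a i + b i * x)) 0 :=
  ContDiffAt.sum fun i hi => (h i hi).comp_const_add_mul (b i)

theorem iteratedDeriv_sum_comp_const_add_mul (h : ∀ i ∈ s, ContDiffAt 𝕜 n f (a i)) :
    iteratedDeriv n (fun x => ∑ i ∈ s, f (a i + b i * x)) 0
      = ∑ i ∈ s, b i ^ n • iteratedDeriv n f (a i) := by
  rw [iteratedDeriv_fun_sum fun i hi => (h i hi).comp_const_add_mul (b i)]
  simp [iteratedDeriv_comp_const_add_mul]

end AffineComposition

theorem d2E_self_eq_iteratedDeriv (E : (ℤ → ℝ) → ℝ) (y u : ℤ → ℝ) :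
    d2E E y u u = iteratedDeriv 2 (fun r : ℝ => E (y + r • u)) 0 := by
  have hinner : ∀ s : ℝ, deriv (fun t : ℝ => E (y + s • u + t • u)) 0
      = deriv (fun r : ℝ => E (y + r • u)) s := by
    intro s
    simpa [add_smul, add_assoc] using deriv_comp_const_add (fun r : ℝ => E (y + r • u)) s 0
  simp only [d2E, hinner, iteratedDeriv_succ, iteratedDeriv_zero]

theorem bD_yF_add_smul {N : ℕ} (hN : N ≠ 0) (F r : ℝ) (u : ℤ → ℝ) (ℓ : ℤ) :
    bD N (yF N F + r • u) ℓ = F + bD N u ℓ * r := by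
  simp only [bD, yF, Pi.add_apply, Pi.smul_apply, smul_eq_mul]
  push_cast
  field_simp
  ring

theorem eCont_yF_add_smul {N : ℕ} (hN : N ≠ 0) (φ : ℝ → ℝ) (F r : ℝ) (u : ℤ → ℝ) (ℓ : ℤ) :
    eCont N φ (yF N F + r • u) ℓ = (∑ i, φ (![F, F, 2 * F, 2 * F] i
      + ![bD N u ℓ, bD N u (ℓ + 1), 2 * bD N u ℓ, 2 * bD N u (ℓ + 1)] i * r)) / 2 := by
  simp only [eCont, bD_yF_add_smul hN, Fin.sum_univ_four, Matrix.cons_val_zero,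
    Matrix.cons_val_one, Matrix.cons_val]
  ring_nf

theorem eAtom_yF_add_smul {N : ℕ} (hN : N ≠ 0) (φ : ℝ → ℝ) (F r : ℝ) (u : ℤ → ℝ) (ℓ : ℤ) :
    eAtom N φ (yF N F + r • u) ℓ = (∑ i, φ (![F, F, 2 * F, 2 * F] i
      + ![bD N u ℓ, bD N u (ℓ + 1), bD N u (ℓ - 1) + bD N u ℓ,
          bD N u (ℓ + 1) + bD N u (ℓ + 2)] i * r)) / 2 := by
  simp only [eAtom, bD_yF_add_smul hN, Fin.sum_univ_four, Matrix.cons_val_zero,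
    Matrix.cons_val_one, Matrix.cons_val]
  ring_nf

theorem d2E_Eqce_yF {N : ℕ} (hN : N ≠ 0) (K : ℕ) {φ : ℝ → ℝ}
    (hφ : ContDiffOn ℝ 2 φ (Set.Ioi 0)) {F : ℝ} (hF : 0 < F) (u : ℤ → ℝ) :
    d2E (Eqce N K φ) (yF N F) u u = (N : ℝ)⁻¹ *
      ((deriv (deriv φ) F + 4 * deriv (deriv φ) (2 * F)) / 2
          * ∑ ℓ ∈ idx N \ aQce K, (bD N u ℓ ^ 2 + bD N u (ℓ + 1) ^ 2)
        + deriv (deriv φ) F / 2 * ∑ ℓ ∈ aQce K, (bD N u ℓ ^ 2 + bD N u (ℓ + 1) ^ 2)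
        + deriv (deriv φ) (2 * F) / 2 * ∑ ℓ ∈ aQce K,
            ((bD N u (ℓ - 1) + bD N u ℓ) ^ 2 + (bD N u (ℓ + 1) + bD N u (ℓ + 2)) ^ 2)) := by
  have hsmooth : ∀ i ∈ Finset.univ, ContDiffAt ℝ (2 : ℕ) φ (![F, F, 2 * F, 2 * F] i) := by
    have hF₁ := hφ.contDiffAt (Ioi_mem_nhds hF)
    have hF₂ := hφ.contDiffAt (Ioi_mem_nhds (by positivity : (0 : ℝ) < 2 * F))
    intro i _
    fin_cases i <;> assumption
  have hsite := fun (b : Fin 4 → ℝ) =>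
    (contDiffAt_sum_comp_const_add_mul Finset.univ _ b hsmooth).div_const 2
  rw [d2E_self_eq_iteratedDeriv]
  simp only [Eqce, eCont_yF_add_smul hN, eAtom_yF_add_smul hN]
  rw [iteratedDeriv_const_mul_field,
    iteratedDeriv_fun_add (ContDiffAt.sum fun _ _ => hsite _) (ContDiffAt.sum fun _ _ => hsite _),
    iteratedDeriv_fun_sum fun _ _ => hsite _, iteratedDeriv_fun_sum fun _ _ => hsite _]
  simp only [iteratedDeriv_div_const, iteratedDeriv_sum_comp_const_add_mul _ _ _ hsmooth]
  simp only [Fin.sum_univ_four, iteratedDeriv_succ, iteratedDeriv_zero, smul_eq_mul,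
    Matrix.cons_val_zero, Matrix.cons_val_one, Matrix.cons_val]
  rw [Finset.mul_sum, Finset.mul_sum, Finset.mul_sum, add_assoc, ← Finset.sum_add_distrib]
  congr 2 <;> exact Finset.sum_congr rfl fun ℓ _ => by ring

theorem bD_add_two_mul_of_periodic {N : ℕ} {w : ℤ → ℝ} (hper : ∀ ℓ : ℤ, w (ℓ + 2 * N) = w ℓ)
    (ℓ : ℤ) : bD N w (ℓ + 2 * N) = bD N w ℓ := by
  rw [bD, bD, hper, show ℓ + 2 * N - 1 = ℓ - 1 + 2 * N by ring, hper]

theorem bD_eq_zero_of_periodic {N K : ℕ} {w : ℤ → ℝ} {c : ℝ} (hKN : K + 3 ≤ N)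
    (hper : ∀ ℓ : ℤ, w (ℓ + 2 * N) = w ℓ)
    (hw : ∀ ℓ ∈ idx N, bD N w ℓ =
      if ℓ = (K : ℤ) + 2 then c else if ℓ = -(K : ℤ) - 1 then -c else 0) :
    ∀ ℓ : ℤ, -(N : ℤ) + 1 ≤ ℓ → ℓ ≤ N + 1 → ℓ ≠ K + 2 → ℓ ≠ -K - 1 → bD N w ℓ = 0 := by
  intro ℓ h₁ h₂ hp hm
  obtain hℓ | rfl : ℓ ≤ N ∨ ℓ = N + 1 := by omega
  · simp [hw ℓ (by simp [idx]; omega), hp, hm]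
  · rw [show (N : ℤ) + 1 = -N + 1 + 2 * N by ring, bD_add_two_mul_of_periodic hper,
      hw _ (by simp [idx]; omega), if_neg (by omega), if_neg (by omega)]

section TwoPointSupport

variable {N K : ℕ} {b : ℤ → ℝ}

theorem sum_idx_sq_of_support (hKN : K + 3 ≤ N)
    (hb : ∀ ℓ : ℤ, -(N : ℤ) + 1 ≤ ℓ → ℓ ≤ N + 1 → ℓ ≠ K + 2 → ℓ ≠ -K - 1 → b ℓ = 0) :
    ∑ ℓ ∈ idx N, b ℓ ^ 2 = b (K + 2) ^ 2 + b (-K - 1) ^ 2 := by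
  refine Finset.sum_eq_add_of_mem ((K : ℤ) + 2) (-(K : ℤ) - 1) (by simp [idx]; omega)
    (by simp [idx]; omega) (by omega) fun ℓ hℓ hne => ?_
  simp only [idx, Finset.mem_Icc] at hℓ
  simp [hb ℓ (by omega) (by omega) hne.1 hne.2]

theorem sum_cont_sq_of_support (hKN : K + 3 ≤ N)
    (hb : ∀ ℓ : ℤ, -(N : ℤ) + 1 ≤ ℓ → ℓ ≤ N + 1 → ℓ ≠ K + 2 → ℓ ≠ -K - 1 → b ℓ = 0) :
    ∑ ℓ ∈ idx N \ aQce K, (b ℓ ^ 2 + b (ℓ + 1) ^ 2)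
      = 2 * (b (K + 2) ^ 2 + b (-K - 1) ^ 2) := by
  have hmem : ∀ ℓ : ℤ, ℓ ∈ idx N \ aQce K ↔ -(N : ℤ) + 1 ≤ ℓ ∧ ℓ ≤ N ∧ (ℓ < -K ∨ K < ℓ) := by
    intro ℓ
    simp only [idx, aQce, Finset.mem_sdiff, Finset.mem_Icc]
    omega
  rw [Finset.sum_add_distrib,
    Finset.sum_eq_add_of_mem ((K : ℤ) + 2) (-(K : ℤ) - 1) ((hmem _).2 (by omega))
      ((hmem _).2 (by omega)) (by omega) fun ℓ hℓ hne => by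
        obtain ⟨h₁, h₂, -⟩ := (hmem ℓ).1 hℓ
        simp [hb ℓ h₁ (by omega) hne.1 hne.2],
    Finset.sum_eq_add_of_mem ((K : ℤ) + 1) (-(K : ℤ) - 2) ((hmem _).2 (by omega))
      ((hmem _).2 (by omega)) (by omega) fun ℓ hℓ hne => by
        obtain ⟨h₁, h₂, -⟩ := (hmem ℓ).1 hℓ
        simp [hb (ℓ + 1) (by omega) (by omega) (by omega) (by omega)]]
  ring_nf

theorem sum_atom_sq_of_support (hKN : K + 3 ≤ N)
    (hb : ∀ ℓ : ℤ, -(N : ℤ) + 1 ≤ ℓ → ℓ ≤ N + 1 → ℓ ≠ K + 2 → ℓ ≠ -K - 1 → b ℓ = 0) :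
    ∑ ℓ ∈ aQce K, (b ℓ ^ 2 + b (ℓ + 1) ^ 2) = 0 := by
  refine Finset.sum_eq_zero fun ℓ hℓ => ?_
  simp only [aQce, Finset.mem_Icc] at hℓ
  simp [hb ℓ (by omega) (by omega) (by omega) (by omega),
    hb (ℓ + 1) (by omega) (by omega) (by omega) (by omega)]

theorem sum_atom_next_sq_of_support (hKN : K + 3 ≤ N)
    (hb : ∀ ℓ : ℤ, -(N : ℤ) + 1 ≤ ℓ → ℓ ≤ N + 1 → ℓ ≠ K + 2 → ℓ ≠ -K - 1 → b ℓ = 0) :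
    ∑ ℓ ∈ aQce K, ((b (ℓ - 1) + b ℓ) ^ 2 + (b (ℓ + 1) + b (ℓ + 2)) ^ 2)
      = b (K + 2) ^ 2 + b (-K - 1) ^ 2 := by
  have hmem : ∀ ℓ : ℤ, ℓ ∈ aQce K ↔ -(K : ℤ) ≤ ℓ ∧ ℓ ≤ K := fun ℓ => by simp [aQce]
  rw [Finset.sum_add_distrib,
    Finset.sum_eq_single_of_mem (-(K : ℤ)) ((hmem _).2 (by omega)) fun ℓ hℓ hne => by
      obtain ⟨h₁, h₂⟩ := (hmem ℓ).1 hℓ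
      simp [hb ℓ (by omega) (by omega) (by omega) (by omega),
        hb (ℓ - 1) (by omega) (by omega) (by omega) (by omega)],
    Finset.sum_eq_single_of_mem (K : ℤ) ((hmem _).2 (by omega)) fun ℓ hℓ hne => by
      obtain ⟨h₁, h₂⟩ := (hmem ℓ).1 hℓ
      simp [hb (ℓ + 1) (by omega) (by omega) (by omega) (by omega),
        hb (ℓ + 2) (by omega) (by omega) (by omega) (by omega)],
    hb (-K) (by omega) (by omega) (by omega) (by omega),
    hb (K + 1) (by omega) (by omega) (by omega) (by omega)]
  ring_nf

end TwoPointSupport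

theorem stmt11_general (N K : ℕ) (hKN : K + 3 ≤ N)
    (φ : ℝ → ℝ) (hφ : ContDiffOn ℝ 2 φ (Set.Ioi 0)) (F : ℝ) (hF : 0 < F)
    (w : ℤ → ℝ) (hw : w ∈ uSet N)
    (hwD : ∀ ℓ ∈ idx N, bD N w ℓ =
      if ℓ = (K : ℤ) + 2 then (Real.sqrt (2 * (N : ℝ)⁻¹))⁻¹
      else if ℓ = -(K : ℤ) - 1 then -(Real.sqrt (2 * (N : ℝ)⁻¹))⁻¹ else 0) :
    nl2 N (bD N w) = 1
    ∧ d2E (Eqce N K φ) (yF N F) w w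
        = deriv (deriv φ) F + 4 * deriv (deriv φ) (2 * F)
          + 1 / 2 * deriv (deriv φ) (2 * F)
    ∧ (deriv (deriv φ) F + 4 * deriv (deriv φ) (2 * F)
          + 1 / 2 * deriv (deriv φ) (2 * F) ≤ 0 →
        ¬ ∀ u ∈ uSet N, u ≠ 0 → 0 < d2E (Eqce N K φ) (yF N F) u u) := by
  have hN : (N : ℝ) ≠ 0 := by norm_cast; omega
  have hsupp := bD_eq_zero_of_periodic hKN hw.1 hwD
  have hsq : bD N w (K + 2) ^ 2 + bD N w (-K - 1) ^ 2 = N := by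
    rw [hwD _ (by simp [idx]; omega), hwD _ (by simp [idx]; omega), if_pos rfl,
      if_neg (by omega), if_pos rfl, neg_sq, inv_pow, Real.sq_sqrt (by positivity)]
    field_simp
    ring
  have hd2E : d2E (Eqce N K φ) (yF N F) w w = deriv (deriv φ) F + 4 * deriv (deriv φ) (2 * F)
      + 1 / 2 * deriv (deriv φ) (2 * F) := by
    rw [d2E_Eqce_yF (by omega) K hφ hF, sum_cont_sq_of_support hKN hsupp,
      sum_atom_sq_of_support hKN hsupp, sum_atom_next_sq_of_support hKN hsupp, hsq]
    field_simp
    ring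
  refine ⟨?_, hd2E, fun hle hpos => ?_⟩
  · rw [nl2, sum_idx_sq_of_support hKN hsupp, hsq, inv_mul_cancel₀ hN, Real.sqrt_one]
  · have hw0 : w ≠ 0 := by
      rintro rfl
      exact hN (by simpa [bD] using hsq.symm)
    linarith [hpos w hw hw0]

theorem stmt11 (N K : ℕ) (hN : 2 ≤ N) (hK : 1 < K) (hKN : K + 3 ≤ N)
    (φ : ℝ → ℝ) (hφ : ContDiffOn ℝ 2 φ (Set.Ioi 0)) (F : ℝ) (hF : 0 < F)
    (w : ℤ → ℝ) (hw : w ∈ uSet N)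
    (hwD : ∀ ℓ ∈ idx N, bD N w ℓ =
      if ℓ = (K : ℤ) + 2 then (Real.sqrt (2 * (N : ℝ)⁻¹))⁻¹
      else if ℓ = -(K : ℤ) - 1 then -(Real.sqrt (2 * (N : ℝ)⁻¹))⁻¹ else 0) :
    nl2 N (bD N w) = 1
    ∧ d2E (Eqce N K φ) (yF N F) w w
        = deriv (deriv φ) F + 4 * deriv (deriv φ) (2 * F)
          + 1 / 2 * deriv (deriv φ) (2 * F)
    ∧ (deriv (deriv φ) F + 4 * deriv (deriv φ) (2 * F)
          + 1 / 2 * deriv (deriv φ) (2 * F) ≤ 0 →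
        ¬ ∀ u ∈ uSet N, u ≠ 0 → 0 < d2E (Eqce N K φ) (yF N F) u u) :=
  stmt11_general N K hKN φ hφ F hF w hw hwD
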